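/- The second derivative of f(l) = log U(l), with U the sigmoidal utility with parameters a,b > 0, equals -a² θ(l)/(1+θ(l))² where θ(l) = e^{-a(l-b)}; in particular it is strictly negative for all l. -/

import Mathlib

/-!
Since `c * d = exp (-(a * b))`, the utility simplifies to `U l = c / (1 + exp (a * (l - b)))`, so
`log U` is a constant minus the softplus `t ↦ log (1 + exp t)` of the affine map `l ↦ a * (l - b)`.
The derivative of softplus is the logistic function `1 / (1 + exp (-t))`, whose derivative is
`exp (-t) / (1 + exp (-t)) ^ 2`; the chain rule contributes the factor `a ^ 2`.
-/

open Real

theorem hasDerivAt_log_one_add_exp (t : ℝ) :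
    HasDerivAt (fun t => log (1 + exp t)) (1 / (1 + exp (-t))) t := by
  convert ((hasDerivAt_exp t).const_add 1).log (by positivity) using 1
  rw [exp_neg]
  field_simp
  ring

theorem hasDerivAt_one_div_one_add_exp_neg (t : ℝ) :
    HasDerivAt (fun t => 1 / (1 + exp (-t))) (exp (-t) / (1 + exp (-t)) ^ 2) t :=
  ((hasDerivAt_const t 1).div ((hasDerivAt_neg t).exp.const_add 1) (by positivity)).congr_deriv
    (by ring)

theorem hasDerivAt_mul_sub (a b x : ℝ) : HasDerivAt (fun x => a * (x - b)) a x := by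
  simpa using ((hasDerivAt_id x).sub_const b).const_mul a

theorem deriv_deriv_const_sub_log_one_add_exp_mul_sub (K a b l : ℝ) :
    deriv (deriv fun x => K - log (1 + exp (a * (x - b)))) l =
      -a ^ 2 * exp (-a * (l - b)) / (1 + exp (-a * (l - b))) ^ 2 := by
  have first : deriv (fun x => K - log (1 + exp (a * (x - b)))) =
      fun x => -(1 / (1 + exp (-(a * (x - b)))) * a) := by
    funext x
    exact (((hasDerivAt_log_one_add_exp _).comp x (hasDerivAt_mul_sub a b x)).const_sub K).deriv
  have second : HasDerivAt (fun x => -(1 / (1 + exp (-(a * (x - b)))) * a))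
      (-(exp (-(a * (l - b))) / (1 + exp (-(a * (l - b)))) ^ 2 * a * a)) l :=
    ((hasDerivAt_one_div_one_add_exp_neg _).comp l (hasDerivAt_mul_sub a b l)).mul_const a |>.neg
  rw [first, second.deriv]
  simp only [neg_mul]
  ring

theorem log_utility_eq {a b c d : ℝ} {U : ℝ → ℝ}
    (hc : c = (1 + exp (a*b)) / exp (a*b)) (hd : d = 1 / (1 + exp (a*b)))
    (hU : ∀ l, U l = 1 - c * (1 / (1 + exp (-a*(l-b))) - d)) (l : ℝ) :
    log (U l) = log c - log (1 + exp (a * (l - b))) := by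
  have hU' : U l = c / (1 + exp (a * (l - b))) := by
    rw [hU, hc, hd, neg_mul, exp_neg]
    field_simp
    ring
  rw [hU', log_div (by rw [hc]; positivity) (by positivity)]

theorem stmt_7_general (a b : ℝ) (ha : 0 < a)
    (c d : ℝ) (hc : c = (1 + Real.exp (a*b)) / Real.exp (a*b))
    (hd : d = 1 / (1 + Real.exp (a*b)))
    (U θ : ℝ → ℝ) (hU : ∀ l, U l = 1 - c * (1 / (1 + Real.exp (-a*(l-b))) - d))
    (hθ : ∀ l, θ l = Real.exp (-a*(l-b))) :
    ∀ l : ℝ, deriv (deriv (fun x => Real.log (U x))) l = -a^2 * θ l / (1 + θ l)^2 ∧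
      deriv (deriv (fun x => Real.log (U x))) l < 0 := by
  intro l
  have second : deriv (deriv (fun x => log (U x))) l = -a^2 * θ l / (1 + θ l)^2 := by
    simp only [log_utility_eq hc hd hU, deriv_deriv_const_sub_log_one_add_exp_mul_sub, hθ]
  have hθ_pos : 0 < θ l := hθ l ▸ exp_pos _
  refine ⟨second, second ▸ div_neg_of_neg_of_pos ?_ (by positivity)⟩
  rw [neg_mul, neg_lt_zero]
  exact mul_pos (pow_pos ha 2) hθ_pos

theorem stmt_7 (a b : ℝ) (ha : 0 < a) (hb : 0 < b)
    (c d : ℝ) (hc : c = (1 + Real.exp (a*b)) / Real.exp (a*b))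
    (hd : d = 1 / (1 + Real.exp (a*b)))
    (U θ : ℝ → ℝ) (hU : ∀ l, U l = 1 - c * (1 / (1 + Real.exp (-a*(l-b))) - d))
    (hθ : ∀ l, θ l = Real.exp (-a*(l-b))) :
    ∀ l : ℝ, deriv (deriv (fun x => Real.log (U x))) l = -a^2 * θ l / (1 + θ l)^2 ∧
      deriv (deriv (fun x => Real.log (U x))) l < 0 :=
  stmt_7_general a b ha c d hc hd U θ hU hθ
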